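/- arXiv:1912.00058 — 5 statements merged into one kernel-verified Lean document; each statement's English description precedes it below -/
import Mathlib

section
/- Let L ≥ 1, let d_1,…,d_L be positive integers, and let F : ℝ^{d_1} × ⋯ × ℝ^{d_L} → ℝ be a function such that for each index l and each fixed choice of the other blocks, the map u ↦ F(w_1,…,w_{l-1},u,w_{l+1},…,w_L) is twice continuously differentiable. Suppose there are positive real numbers λ_1,…,λ_L such that F(w_1,…,w_L) = F(λ_1 w_1,…,λ_L w_L) for all (w_1,…,w_L). Then for every l and every point w = (w_1,…,w_L), writing w^λ = (λ_1 w_1,…,λ_L w_L), the flatness measure κ^l satisfies κ^l(w) = κ^l(w^λ); that is, ‖w_l‖² · λ_max(H_l(w)) = ‖λ_l w_l‖² · λ_max(H_l(w^λ)), where H_l(v) denotes the Hessian matrix of the map u ↦ F(v_1,…,v_{l-1},u,v_{l+1},…,v_L) evaluated at u = v_l, and λ_max denotes the largest eigenvalue of a real symmetric matrix. -/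
/-- The largest eigenvalue of a (symmetric) real matrix, as the supremum of its
eigenvalue set. -/
noncomputable def lambdaMax {ι : Type*} [Fintype ι] [DecidableEq ι]
    (A : Matrix ι ι ℝ) : ℝ :=
  sSup {μ : ℝ | Module.End.HasEigenvalue (Matrix.toLin' A) μ}

/-- The Hessian matrix of `F : ℝ^ι → ℝ` at the point `u`, given by the matrix of
second partial derivatives. -/
noncomputable def hessianMatrix {ι : Type*} [Fintype ι] [DecidableEq ι]
    (F : EuclideanSpace ℝ ι → ℝ) (u : EuclideanSpace ℝ ι) : Matrix ι ι ℝ :=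
  Matrix.of fun i j =>
    fderiv ℝ (fun x => fderiv ℝ F x (EuclideanSpace.single j 1)) u
      (EuclideanSpace.single i 1)

/-- The layer-wise Hessian of `F` with respect to the `l`-th block at `v`. -/
noncomputable def layerHessian {L : ℕ} {d : Fin L → ℕ}
    (F : (∀ l : Fin L, EuclideanSpace ℝ (Fin (d l))) → ℝ)
    (l : Fin L) (v : ∀ l : Fin L, EuclideanSpace ℝ (Fin (d l))) :
    Matrix (Fin (d l)) (Fin (d l)) ℝ :=
  hessianMatrix (fun u => F (Function.update v l u)) (v l)

section Aux

open Pointwise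

lemma hasEigenvalue_smul_iff_aux {V : Type*} [AddCommGroup V] [Module ℝ V]
    (f : Module.End ℝ V) {a : ℝ} (ha : a ≠ 0) (μ : ℝ) :
    Module.End.HasEigenvalue (a • f) (a * μ) ↔ Module.End.HasEigenvalue f μ := by
  rw [Module.End.hasEigenvalue_iff, Module.End.hasEigenvalue_iff,
    Submodule.ne_bot_iff, Submodule.ne_bot_iff]
  have key : ∀ x : V, (a • f) x = (a * μ) • x ↔ f x = μ • x := by
    intro x
    rw [LinearMap.smul_apply, mul_smul]
    exact (smul_right_injective V ha).eq_iff
  constructor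
  · rintro ⟨x, hx, hx0⟩
    exact ⟨x, Module.End.mem_eigenspace_iff.2 ((key x).1 (Module.End.mem_eigenspace_iff.1 hx)),
      hx0⟩
  · rintro ⟨x, hx, hx0⟩
    exact ⟨x, Module.End.mem_eigenspace_iff.2 ((key x).2 (Module.End.mem_eigenspace_iff.1 hx)),
      hx0⟩

lemma lambdaMax_smul {ι : Type*} [Fintype ι] [DecidableEq ι]
    (A : Matrix ι ι ℝ) {a : ℝ} (ha : 0 < a) :
    lambdaMax (a • A) = a * lambdaMax A := by
  have hset : {μ : ℝ | Module.End.HasEigenvalue (Matrix.toLin' (a • A)) μ} =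
      a • {μ : ℝ | Module.End.HasEigenvalue (Matrix.toLin' A) μ} := by
    ext μ
    simp only [Set.mem_smul_set, Set.mem_setOf_eq]
    rw [map_smul]
    constructor
    · intro h
      refine ⟨a⁻¹ * μ, ?_, by simp [smul_eq_mul, mul_inv_cancel_left₀ ha.ne']⟩
      rw [← hasEigenvalue_smul_iff_aux (Matrix.toLin' A) ha.ne']
      rwa [mul_inv_cancel_left₀ ha.ne']
    · rintro ⟨y, hy, rfl⟩
      rw [smul_eq_mul]
      exact (hasEigenvalue_smul_iff_aux (Matrix.toLin' A) ha.ne' y).2 hy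
  rw [lambdaMax, lambdaMax, hset, Real.sSup_smul_of_nonneg ha.le, smul_eq_mul]

variable {ι : Type*} [Fintype ι] [DecidableEq ι]

/-- Chain rule for precomposition with scalar multiplication. -/
lemma fderiv_comp_smul_aux {F' : Type*} [NormedAddCommGroup F'] [NormedSpace ℝ F']
    (f : EuclideanSpace ℝ ι → F') (hf : Differentiable ℝ f) (c : ℝ)
    (x : EuclideanSpace ℝ ι) (v : EuclideanSpace ℝ ι) :
    fderiv ℝ (fun y => f (c • y)) x v = c • fderiv ℝ f (c • x) v := by
  set S : EuclideanSpace ℝ ι →L[ℝ] EuclideanSpace ℝ ι :=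
    c • ContinuousLinearMap.id ℝ (EuclideanSpace ℝ ι) with hS
  have hSapp : ∀ y, S y = c • y := fun y => rfl
  have h1 : (fun y => f (c • y)) = f ∘ (fun y => S y) := by
    funext y; simp [hSapp]
  rw [h1, fderiv_comp x (hf _) S.differentiableAt, S.fderiv]
  simp [hSapp]

lemma hessian_comp_smul (G : EuclideanSpace ℝ ι → ℝ) (hG : ContDiff ℝ 2 G) (c : ℝ)
    (u : EuclideanSpace ℝ ι) :
    hessianMatrix (fun x => G (c • x)) u = (c ^ 2) • hessianMatrix G (c • u) := by
  have hG1 : ContDiff ℝ 1 (fderiv ℝ G) := hG.fderiv_right (by norm_num)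
  have hgdiff : ∀ v, Differentiable ℝ (fun y => fderiv ℝ G y v) := by
    intro v
    exact fun y => ((hG1.differentiable one_ne_zero) y).clm_apply (differentiableAt_const v)
  have hGdiff : Differentiable ℝ G := hG.differentiable (by norm_num)
  ext i j
  set vi := EuclideanSpace.single (𝕜 := ℝ) i (1 : ℝ)
  set vj := EuclideanSpace.single (𝕜 := ℝ) j (1 : ℝ)
  have step1 : (fun x => fderiv ℝ (fun y => G (c • y)) x vj) =
      fun x => c • (fun y => fderiv ℝ G y vj) (c • x) := by
    funext x
    exact fderiv_comp_smul_aux G hGdiff c x vj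
  have hdiff2 : Differentiable ℝ (fun x => (fun y => fderiv ℝ G y vj) (c • x)) := by
    intro x
    exact ((hgdiff vj) (c • x)).comp x
      ((differentiable_const c).smul differentiable_id).differentiableAt
  calc hessianMatrix (fun x => G (c • x)) u i j
      = fderiv ℝ (fun x => c • (fun y => fderiv ℝ G y vj) (c • x)) u vi := by
        simp only [hessianMatrix, Matrix.of_apply]; exact congrArg (fun g => fderiv ℝ g u vi) step1
    _ = c • fderiv ℝ (fun x => (fun y => fderiv ℝ G y vj) (c • x)) u vi := by
        rw [show (fun x => c • (fun y => fderiv ℝ G y vj) (c • x)) = c • (fun x => (fun y => fderiv ℝ G y vj) (c • x)) from rfl, fderiv_const_smul (hdiff2 u) c]; rfl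
    _ = c • (c • fderiv ℝ (fun y => fderiv ℝ G y vj) (c • u) vi) := by
        rw [fderiv_comp_smul_aux _ (hgdiff vj) c u vi]
    _ = (c ^ 2) • hessianMatrix G (c • u) i j := by
        simp [hessianMatrix, smul_eq_mul]; ring
    _ = ((c ^ 2) • hessianMatrix G (c • u)) i j := by
        simp [Matrix.smul_apply]

end Aux

/-- Invariance of the flatness measure `κ^l(w) = ‖w_l‖² · λ_max(H_l(w))` under
layer-wise multiplication by positive scalars leaving `F` invariant. -/
theorem kappa_invariant_under_layerwise_reparameterization
    {L : ℕ} (hL : 1 ≤ L) (d : Fin L → ℕ) (hd : ∀ l, 0 < d l)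
    (F : (∀ l : Fin L, EuclideanSpace ℝ (Fin (d l))) → ℝ)
    (hF : ∀ (l : Fin L) (w : ∀ l : Fin L, EuclideanSpace ℝ (Fin (d l))),
      ContDiff ℝ 2 (fun u => F (Function.update w l u)))
    (lam : Fin L → ℝ) (hlam : ∀ l, 0 < lam l)
    (hinv : ∀ w : ∀ l : Fin L, EuclideanSpace ℝ (Fin (d l)),
      F w = F (fun l => lam l • w l)) :
    ∀ (l : Fin L) (w : ∀ l : Fin L, EuclideanSpace ℝ (Fin (d l))),
      ‖w l‖ ^ 2 * lambdaMax (layerHessian F l w) =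
        ‖lam l • w l‖ ^ 2 * lambdaMax (layerHessian F l (fun k => lam k • w k)) := by
  intro l w
  set c := lam l with hc
  have hcpos : 0 < c := hlam l
  set wl : ∀ k : Fin L, EuclideanSpace ℝ (Fin (d k)) := fun k => lam k • w k with hwl
  set G : EuclideanSpace ℝ (Fin (d l)) → ℝ := fun u => F (Function.update wl l u) with hGdef
  have hupdate : ∀ u : EuclideanSpace ℝ (Fin (d l)),
      (fun k => lam k • Function.update w l u k) = Function.update wl l (c • u) := by
    intro u
    funext k
    by_cases hk : k = l
    · subst hk; simp; rfl
    · simp [Function.update_of_ne hk]; rfl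
  have hkey : (fun u => F (Function.update w l u)) = fun u => G (c • u) := by
    funext u
    rw [hinv (Function.update w l u), hupdate u]
  have hHess : layerHessian F l w = (c ^ 2) • layerHessian F l wl := by
    have h1 : layerHessian F l w = hessianMatrix (fun u => G (c • u)) (w l) := by
      rw [layerHessian, hkey]
    rw [h1, hessian_comp_smul G (hF l wl) c (w l)]
    rfl
  rw [hHess, lambdaMax_smul _ (by positivity : (0:ℝ) < c ^ 2), norm_smul]
  simp only [Real.norm_eq_abs, mul_pow, sq_abs]
  ring
end

section
/- Let L ≥ 1, let d_1,…,d_L be positive integers, and let F : ℝ^{d_1} × ⋯ × ℝ^{d_L} → ℝ be a function such that for each index l and each fixed choice of the other blocks, the map u ↦ F(w_1,…,w_{l-1},u,w_{l+1},…,w_L) is twice continuously differentiable. Suppose there are positive real numbers λ_1,…,λ_L such that F(w_1,…,w_L) = F(λ_1 w_1,…,λ_L w_L) for all (w_1,…,w_L). Then for every l and every point w = (w_1,…,w_L), writing w^λ = (λ_1 w_1,…,λ_L w_L), the trace-based flatness measure satisfies κ^l_τ(w) = κ^l_τ(w^λ); that is, ‖w_l‖² · Tr(H_l(w)) = ‖λ_l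 w_l‖² · Tr(H_l(w^λ)), where H_l(v) denotes the Hessian matrix of the map u ↦ F(v_1,…,v_{l-1},u,v_{l+1},…,v_L) evaluated at u = v_l. -/
/-- Scaling lemma for Hessian entries: the Hessian of `x ↦ G (c • x)` at `u` equals
`c²` times the Hessian of `G` at `c • u`, entrywise. -/
lemma hess_entry_scale {ι : Type*} [Fintype ι] [DecidableEq ι]
    (G : EuclideanSpace ℝ ι → ℝ) (hG : ContDiff ℝ 2 G) (c : ℝ)
    (u : EuclideanSpace ℝ ι) (i j : ι) :
    hessianMatrix (fun x => G (c • x)) u i j = c ^ 2 * hessianMatrix G (c • u) i j := by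
  classical
  set S : EuclideanSpace ℝ ι →L[ℝ] EuclideanSpace ℝ ι :=
    c • ContinuousLinearMap.id ℝ (EuclideanSpace ℝ ι) with hS
  have hSx : ∀ x : EuclideanSpace ℝ ι, S x = c • x := fun x => rfl
  have hGdiff : Differentiable ℝ G := hG.differentiable (by norm_num)
  have h1 : ∀ x : EuclideanSpace ℝ ι,
      fderiv ℝ (fun y => G (c • y)) x = c • fderiv ℝ G (c • x) := by
    intro x
    have hcomp : fderiv ℝ (G ∘ S) x = (fderiv ℝ G (S x)).comp (fderiv ℝ S x) :=
      fderiv_comp x (hGdiff.differentiableAt) (S.differentiableAt)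
    have h : fderiv ℝ (fun y => G (c • y)) x = (fderiv ℝ G (c • x)).comp S := by
      rw [show (fun y => G (c • y)) = G ∘ S from rfl, hcomp, S.fderiv, hSx]
    rw [h]
    ext v
    simp [hSx, smul_eq_mul]
  set ej : EuclideanSpace ℝ ι := EuclideanSpace.single j 1
  set ei : EuclideanSpace ℝ ι := EuclideanSpace.single i 1
  set φ : EuclideanSpace ℝ ι → ℝ := fun y => fderiv ℝ G y ej with hφ
  have hΦ : ContDiff ℝ 1 (fderiv ℝ G) := hG.fderiv_right (by norm_num)
  have hφdiff : Differentiable ℝ φ :=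
    (hΦ.differentiable (by norm_num)).clm_apply (differentiable_const _)
  have h2 : (fun x => fderiv ℝ (fun y => G (c • y)) x ej)
      = fun x => c * φ (c • x) := by
    funext x; rw [h1 x]; simp [φ]
  have hψdiff : DifferentiableAt ℝ (fun x => φ (c • x)) u :=
    (hφdiff (c • u)).comp u (S.differentiableAt)
  have hcomp2 : fderiv ℝ (fun x => φ (c • x)) u = (fderiv ℝ φ (c • u)).comp S := by
    have h := fderiv_comp u (hφdiff.differentiableAt (x := S u)) (S.differentiableAt)
    rw [show (fun x => φ (c • x)) = φ ∘ S from rfl, h, S.fderiv, hSx]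
  have h3 : fderiv ℝ (fun x => c * φ (c • x)) u ei
      = c * (c * fderiv ℝ φ (c • u) ei) := by
    rw [fderiv_const_mul hψdiff c]
    simp [hcomp2, hSx, smul_eq_mul]
  simp only [hessianMatrix, Matrix.of_apply]
  rw [show (fun x => fderiv ℝ (fun y : EuclideanSpace ℝ ι => G (c • y)) x
      (EuclideanSpace.single j 1)) = fun x => c * φ (c • x) from h2, h3]
  ring

/-- Invariance of the flatness measure `κ^l_τ(w) = ‖w_l‖² · Tr(H_l(w))` under
layer-wise multiplication by positive scalars leaving `F` invariant. -/
theorem kappaTau_invariant_under_layerwise_reparameterization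
    {L : ℕ} (hL : 1 ≤ L) (d : Fin L → ℕ) (hd : ∀ l, 0 < d l)
    (F : (∀ l : Fin L, EuclideanSpace ℝ (Fin (d l))) → ℝ)
    (hF : ∀ (l : Fin L) (w : ∀ l : Fin L, EuclideanSpace ℝ (Fin (d l))),
      ContDiff ℝ 2 (fun u => F (Function.update w l u)))
    (lam : Fin L → ℝ) (hlam : ∀ l, 0 < lam l)
    (hinv : ∀ w : ∀ l : Fin L, EuclideanSpace ℝ (Fin (d l)),
      F w = F (fun l => lam l • w l)) :
    ∀ (l : Fin L) (w : ∀ l : Fin L, EuclideanSpace ℝ (Fin (d l))),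
      ‖w l‖ ^ 2 * Matrix.trace (layerHessian F l w) =
        ‖lam l • w l‖ ^ 2 * Matrix.trace (layerHessian F l (fun k => lam k • w k)) := by
  intro l w
  classical
  set c : ℝ := lam l with hc
  set w' : ∀ k : Fin L, EuclideanSpace ℝ (Fin (d k)) := fun k => lam k • w k with hw'
  set G : EuclideanSpace ℝ (Fin (d l)) → ℝ := fun u => F (Function.update w' l u) with hG
  have hGc2 : ContDiff ℝ 2 G := hF l w'
  -- The original layer function equals `G (c • ·)`.
  have hfun : (fun u => F (Function.update w l u)) = fun u => G (c • u) := by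
    funext u
    have harg : (fun k => lam k • Function.update w l u k)
        = Function.update w' l (c • u) := by
      funext k
      by_cases h : k = l
      · subst h; simp [hc]
      · simp [Function.update_of_ne h, hw']
    rw [hinv (Function.update w l u), harg]
  -- Relate the two layer Hessians entrywise.
  have hentry : ∀ i j, layerHessian F l w i j
      = c ^ 2 * layerHessian F l w' i j := by
    intro i j
    have : layerHessian F l w i j = hessianMatrix (fun u => G (c • u)) (w l) i j := by
      unfold layerHessian; rw [hfun]
    rw [this, hess_entry_scale G hGc2 c (w l) i j]
    have hwl : w' l = c • w l := rfl
    unfold layerHessian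
    rw [hwl]
  -- Traces.
  have htr : Matrix.trace (layerHessian F l w)
      = c ^ 2 * Matrix.trace (layerHessian F l w') := by
    simp only [Matrix.trace, Matrix.diag]
    rw [Finset.mul_sum]
    exact Finset.sum_congr rfl fun i _ => hentry i i
  -- Norms.
  have hnorm : ‖c • w l‖ ^ 2 = c ^ 2 * ‖w l‖ ^ 2 := by
    rw [norm_smul, mul_pow, Real.norm_eq_abs, sq_abs]
  rw [htr, hnorm]
  ring
end

section
/- Let F, F̃ : ℝ^d → ℝ be twice continuously differentiable functions and let λ > 0 be such that F(w) = F̃(λ w) for all w ∈ ℝ^d. Then for every w ∈ ℝ^d: ‖w‖² · Tr(Hess F (w)) = ‖λ w‖² · Tr(Hess F̃ (λ w)), where Tr denotes the trace of a matrix and ‖·‖ is the Euclidean norm. -/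
/-- If `F(w) = F̃(λw)` for all `w` with `λ > 0`, then
`‖w‖² · Tr(Hess F (w)) = ‖λw‖² · Tr(Hess F̃ (λw))`. -/
theorem kappaTau_invariant_single {d : ℕ} (F Ft : EuclideanSpace ℝ (Fin d) → ℝ)
    (hF : ContDiff ℝ 2 F) (hFt : ContDiff ℝ 2 Ft)
    (lam : ℝ) (hlam : 0 < lam)
    (heq : ∀ w : EuclideanSpace ℝ (Fin d), F w = Ft (lam • w)) :
    ∀ w : EuclideanSpace ℝ (Fin d),
      ‖w‖ ^ 2 * Matrix.trace (hessianMatrix F w) =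
        ‖lam • w‖ ^ 2 * Matrix.trace (hessianMatrix Ft (lam • w)) := by
  intro w
  have hFfun : F = fun y => Ft (lam • y) := funext heq
  subst hFfun
  set L : EuclideanSpace ℝ (Fin d) →L[ℝ] EuclideanSpace ℝ (Fin d) :=
    lam • ContinuousLinearMap.id ℝ (EuclideanSpace ℝ (Fin d)) with hL
  have hg : ∀ x : EuclideanSpace ℝ (Fin d),
      HasFDerivAt (fun y : EuclideanSpace ℝ (Fin d) => lam • y) L x := by
    intro x
    exact (hasFDerivAt_id x).const_smul lam
  have hFtd : Differentiable ℝ Ft := hFt.differentiable two_ne_zero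
  have h1 : ∀ x : EuclideanSpace ℝ (Fin d), fderiv ℝ (fun y => Ft (lam • y)) x =
      (fderiv ℝ Ft (lam • x)).comp L := fun x =>
    (((hFtd (lam • x)).hasFDerivAt).comp x (hg x)).fderiv
  -- the first-derivative map of Ft is C¹
  have hFt' : ContDiff ℝ 1 (fderiv ℝ Ft) := hFt.fderiv_right (m := 1) (by norm_num)
  have hG : ∀ j, Differentiable ℝ
      (fun y : EuclideanSpace ℝ (Fin d) => fderiv ℝ Ft y (EuclideanSpace.single j 1)) := by
    intro j
    exact ((hFt'.clm_apply contDiff_const).differentiable one_ne_zero)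
  have key : ∀ i j, hessianMatrix (fun y => Ft (lam • y)) w i j =
      lam ^ 2 * hessianMatrix Ft (lam • w) i j := by
    intro i j
    have hinner : (fun x : EuclideanSpace ℝ (Fin d) =>
          fderiv ℝ (fun y => Ft (lam • y)) x (EuclideanSpace.single j 1))
        = fun x : EuclideanSpace ℝ (Fin d) =>
          lam * fderiv ℝ Ft (lam • x) (EuclideanSpace.single j 1) := by
      funext x
      rw [h1 x]
      simp [hL, mul_comm]
    have hf : ∀ x : EuclideanSpace ℝ (Fin d), HasFDerivAt
        (fun x : EuclideanSpace ℝ (Fin d) =>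
          fderiv ℝ Ft (lam • x) (EuclideanSpace.single j 1))
        (((fderiv ℝ (fun y : EuclideanSpace ℝ (Fin d) =>
            fderiv ℝ Ft y (EuclideanSpace.single j 1)) (lam • x))).comp L)
        x := by
      intro x
      exact ((hG j (lam • x)).hasFDerivAt).comp x (hg x)
    have hval : fderiv ℝ
        (fun x : EuclideanSpace ℝ (Fin d) =>
          lam * fderiv ℝ Ft (lam • x) (EuclideanSpace.single j 1)) w
        (EuclideanSpace.single i 1)
        = lam * ((fderiv ℝ (fun y : EuclideanSpace ℝ (Fin d) =>
            fderiv ℝ Ft y (EuclideanSpace.single j 1)) (lam • w)).comp L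
            (EuclideanSpace.single i 1)) := by
      rw [fderiv_const_mul (hf w).differentiableAt, (hf w).fderiv]
      simp
    simp only [hessianMatrix, Matrix.of_apply]
    rw [hinner, hval]
    simp [hL]
    ring
  have htr : Matrix.trace (hessianMatrix (fun y => Ft (lam • y)) w)
      = lam ^ 2 * Matrix.trace (hessianMatrix Ft (lam • w)) := by
    simp only [Matrix.trace, Matrix.diag]
    rw [Finset.mul_sum]
    exact Finset.sum_congr rfl fun i _ => key i i
  have hnorm : ‖lam • w‖ ^ 2 = lam ^ 2 * ‖w‖ ^ 2 := by
    rw [norm_smul]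
    simp [mul_pow, abs_of_pos hlam]
  rw [htr, hnorm]
  ring
end

section
/- Let L ≥ 1 and for each l = 1,…,L let the l-th weight block be a matrix w_l ∈ ℝ^{n_l × m_l}. Let F be a real-valued function of the tuple (w_1,…,w_L) such that for each l, each column index j, and each fixed choice of all other entries, the map on the j-th column of w_l is twice continuously differentiable. Suppose there are positive real numbers λ_l^{(i,j)} (one for each layer l and matrix position (i,j)) such that, denoting by w_l^λ the matrix with entries λ_l^{(i,j)} · w_l^{(i,j)} and w^λ = (w_1^λ,…,w_L^λ), we have F(w_1,…,w_L) = F(w^λ) for all (w_1,…,w_L). Then for every layer l, every column index j, and every point w: ρ^l(j)(w) = ρ^l(j)(w^λ), where ρ^l(j)(v) := v_l(j)ᵀ · H_{l,j}(v) · v_l(j), v_l(j) denotes the j-th column of the matrix v_l, and H_{l,j}(v) denotes the Hessian of F with respect to the entries of the j-th column of the l-th weight matrix, evaluated at v. -/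
open scoped Matrix

/-- The Hessian `H_{l,j}(v)` of `F` with respect to the entries of the `j`-th
column of the `l`-th weight matrix, evaluated at `v`. -/
noncomputable def columnHessian {L : ℕ} {n m : Fin L → ℕ}
    (F : (∀ l : Fin L, Matrix (Fin (n l)) (Fin (m l)) ℝ) → ℝ)
    (l : Fin L) (j : Fin (m l))
    (v : ∀ l : Fin L, Matrix (Fin (n l)) (Fin (m l)) ℝ) :
    Matrix (Fin (n l)) (Fin (n l)) ℝ :=
  hessianMatrix
    (fun u : EuclideanSpace ℝ (Fin (n l)) =>
      F (Function.update v l (Matrix.updateCol (v l) j fun i => u i)))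
    (WithLp.toLp 2 fun i => v l i j)

/-- The neuron-wise flatness measure `ρ^l(j)(v) = v_l(j)ᵀ · H_{l,j}(v) · v_l(j)`. -/
noncomputable def rho {L : ℕ} {n m : Fin L → ℕ}
    (F : (∀ l : Fin L, Matrix (Fin (n l)) (Fin (m l)) ℝ) → ℝ)
    (l : Fin L) (j : Fin (m l))
    (v : ∀ l : Fin L, Matrix (Fin (n l)) (Fin (m l)) ℝ) : ℝ :=
  (fun i => v l i j) ⬝ᵥ (columnHessian F l j v).mulVec (fun i => v l i j)

/- ### Auxiliary material -/

/-- The continuous linear map scaling each coordinate by `c i`. -/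
noncomputable def diagCLM {N : ℕ} (c : Fin N → ℝ) :
    EuclideanSpace ℝ (Fin N) →L[ℝ] EuclideanSpace ℝ (Fin N) :=
  LinearMap.toContinuousLinearMap
    { toFun := fun u => (WithLp.toLp 2 (fun i => c i * u i) : EuclideanSpace ℝ (Fin N))
      map_add' := by intro u v; ext i; simp [mul_add]
      map_smul' := by intro r u; ext i; simp [mul_comm, mul_left_comm] }

lemma diagCLM_apply {N : ℕ} (c : Fin N → ℝ) (u : EuclideanSpace ℝ (Fin N)) (i : Fin N) :
    diagCLM c u i = c i * u i := rfl

lemma diagCLM_single {N : ℕ} (c : Fin N → ℝ) (k : Fin N) :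
    diagCLM c (EuclideanSpace.single k 1) = c k • EuclideanSpace.single k 1 := by
  ext i
  simp [diagCLM_apply, EuclideanSpace.single_apply]
  by_cases h : i = k <;> simp [h]

section secondDeriv

variable {E : Type*} [NormedAddCommGroup E] [NormedSpace ℝ E]

lemma fderiv_apply_diff {h : E → ℝ} (hh : ContDiff ℝ 2 h) (e : E) :
    Differentiable ℝ (fun x => fderiv ℝ h x e) := by
  have h1 : ContDiff ℝ 1 (fderiv ℝ h) := hh.fderiv_right (by norm_num)
  exact (h1.differentiable (by norm_num)).clm_apply (differentiable_const e)

lemma fderiv2_comp {h : E → ℝ} (hh : ContDiff ℝ 2 h) (A : E →L[ℝ] E) (u v w : E) :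
    fderiv ℝ (fun x => fderiv ℝ (fun y => h (A y)) x v) u w
      = fderiv ℝ (fun x => fderiv ℝ h x (A v)) (A u) (A w) := by
  have hd : Differentiable ℝ h := hh.differentiable (by norm_num)
  have h1 : (fun x => fderiv ℝ (fun y => h (A y)) x v)
      = fun x => fderiv ℝ h (A x) (A v) := by
    funext x
    have h0 : fderiv ℝ (h ∘ A) x = (fderiv ℝ h (A x)).comp (fderiv ℝ A x) :=
      fderiv_comp x (hd (A x)) A.differentiableAt
    rw [A.fderiv] at h0
    have h0' : fderiv ℝ (fun y => h (A y)) x = (fderiv ℝ h (A x)).comp A := h0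
    rw [h0']; rfl
  rw [h1]
  have hψ : DifferentiableAt ℝ (fun y => fderiv ℝ h y (A v)) (A u) :=
    (fderiv_apply_diff hh (A v)) (A u)
  have h2 : fderiv ℝ ((fun y => fderiv ℝ h y (A v)) ∘ A) u
      = (fderiv ℝ (fun y => fderiv ℝ h y (A v)) (A u)).comp (fderiv ℝ A u) :=
    fderiv_comp u hψ A.differentiableAt
  rw [A.fderiv] at h2
  have h2' : fderiv ℝ (fun x => fderiv ℝ h (A x) (A v)) u
      = (fderiv ℝ (fun y => fderiv ℝ h y (A v)) (A u)).comp A := h2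
  rw [h2']; rfl

lemma fderiv2_smul {h : E → ℝ} (hh : ContDiff ℝ 2 h) (a b : ℝ) (p e e' : E) :
    fderiv ℝ (fun x => fderiv ℝ h x (b • e')) p (a • e)
      = a * b * fderiv ℝ (fun x => fderiv ℝ h x e') p e := by
  have h1 : (fun x => fderiv ℝ h x (b • e')) = fun x => b * fderiv ℝ h x e' := by
    funext x; rw [map_smul]; simp
  rw [h1, fderiv_const_mul ((fderiv_apply_diff hh e') p) b]
  simp [map_smul]; ring

end secondDeriv

lemma hess_entry {N : ℕ} {h : EuclideanSpace ℝ (Fin N) → ℝ} (hh : ContDiff ℝ 2 h)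
    (c : Fin N → ℝ) (u : EuclideanSpace ℝ (Fin N)) (i i' : Fin N) :
    hessianMatrix (fun y => h (diagCLM c y)) u i i'
      = c i * c i' * hessianMatrix h (diagCLM c u) i i' := by
  unfold hessianMatrix
  simp only [Matrix.of_apply]
  rw [fderiv2_comp hh (diagCLM c) u _ _, diagCLM_single, diagCLM_single,
    fderiv2_smul hh]

/-- Invariance of the neuron-wise flatness measure `ρ^l(j)` under entry-wise
positive rescalings of all weights that leave `F` invariant. -/
theorem rho_invariant_under_entrywise_reparameterization
    {L : ℕ} (hL : 1 ≤ L) (n m : Fin L → ℕ)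
    (F : (∀ l : Fin L, Matrix (Fin (n l)) (Fin (m l)) ℝ) → ℝ)
    (hF : ∀ (l : Fin L) (j : Fin (m l))
        (w : ∀ l : Fin L, Matrix (Fin (n l)) (Fin (m l)) ℝ),
      ContDiff ℝ 2 (fun u : EuclideanSpace ℝ (Fin (n l)) =>
        F (Function.update w l (Matrix.updateCol (w l) j fun i => u i))))
    (lam : ∀ l : Fin L, Fin (n l) → Fin (m l) → ℝ)
    (hlam : ∀ (l : Fin L) (i : Fin (n l)) (j : Fin (m l)), 0 < lam l i j)
    (hinv : ∀ w : ∀ l : Fin L, Matrix (Fin (n l)) (Fin (m l)) ℝ,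
      F w = F (fun l => Matrix.of fun i j => lam l i j * w l i j)) :
    ∀ (l : Fin L) (j : Fin (m l))
        (w : ∀ l : Fin L, Matrix (Fin (n l)) (Fin (m l)) ℝ),
      rho F l j w = rho F l j (fun l => Matrix.of fun i j => lam l i j * w l i j) := by
  intro l j w
  classical
  set wl : ∀ l' : Fin L, Matrix (Fin (n l')) (Fin (m l')) ℝ :=
    fun l' => Matrix.of fun i j' => lam l' i j' * w l' i j' with hwl
  have hgl2 : ContDiff ℝ 2 (fun u : EuclideanSpace ℝ (Fin (n l)) =>
      F (Function.update wl l (Matrix.updateCol (wl l) j fun i => u i))) := hF l j wl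
  have hg_eq : (fun u : EuclideanSpace ℝ (Fin (n l)) =>
      F (Function.update w l (Matrix.updateCol (w l) j fun i => u i)))
      = fun u => (fun u' : EuclideanSpace ℝ (Fin (n l)) =>
          F (Function.update wl l (Matrix.updateCol (wl l) j fun i => u' i)))
        (diagCLM (fun i => lam l i j) u) := by
    funext u
    rw [hinv (Function.update w l (Matrix.updateCol (w l) j fun i => u i))]
    congr 1
    funext l'
    by_cases hl : l' = l
    · subst hl
      simp only [Function.update_self, hwl]
      ext i j'
      by_cases hj : j' = j <;>
        simp [Matrix.updateCol_apply, diagCLM_apply, hj]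
    · simp [Function.update_of_ne hl, hwl]
  have hpt : diagCLM (fun i => lam l i j) (WithLp.toLp 2 (fun i => w l i j) : EuclideanSpace ℝ (Fin (n l)))
      = (WithLp.toLp 2 (fun i => wl l i j) : EuclideanSpace ℝ (Fin (n l))) := by
    ext i''
    simp [diagCLM_apply, hwl]
  have key : ∀ i i', columnHessian F l j w i i'
      = lam l i j * lam l i' j * columnHessian F l j wl i i' := by
    intro i i'
    unfold columnHessian
    rw [hg_eq]
    rw [hess_entry hgl2 (fun i => lam l i j)
      (WithLp.toLp 2 (fun i => w l i j) : EuclideanSpace ℝ (Fin (n l))) i i']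
    rw [hpt]
  have hwlij : ∀ i : Fin (n l), wl l i j = lam l i j * w l i j := fun i => rfl
  simp only [rho, dotProduct, Matrix.mulVec]
  refine Finset.sum_congr rfl fun i _ => ?_
  rw [Finset.mul_sum, Finset.mul_sum]
  refine Finset.sum_congr rfl fun i' _ => ?_
  rw [key i i', hwlij i, hwlij i']
  ring
end

section
/- Let L ≥ 1 and for each l = 1,…,L let the l-th weight block be a matrix w_l ∈ ℝ^{n_l × m_l}. Let F be a real-valued function of (w_1,…,w_L), twice continuously differentiable in the entries of each column of each block when the other variables are fixed. Suppose there are positive real numbers λ_l^{(i,j)} such that F(w) = F(w^λ) for all w, where w^λ multiplies the entry of w_l at position (i,j) by λ_l^{(i,j)}. Define ρ^l(j)(v) := v_l(j)ᵀ H_{l,j}(v) v_l(j), where v_l(j) is the j-th column of v_l and H_{l,j}(v) is the Hessian of F with respect to the entries of that column at v. Then the layer-wise measures ρ^l(v) := max_j ρ^l(j)(v) and ρ^l_σ(v) := Σ_j ρ^l(j)(v), as well as the network-wise measures ρ^max(v) := max_l ρ^l(v) and ρ^Σ(v) := Σ_{l=1}^L ρ^l_σ(v), all take the same value at w and at w^λ.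 -/
open scoped Matrix

noncomputable def scaleCLM {N : ℕ} (c : Fin N → ℝ) :
    EuclideanSpace ℝ (Fin N) →L[ℝ] EuclideanSpace ℝ (Fin N) :=
  LinearMap.toContinuousLinearMap
    { toFun := fun u => (WithLp.toLp 2 (fun k => c k * u k) : EuclideanSpace ℝ (Fin N))
      map_add' := by intro x y; ext k; simp [mul_add]
      map_smul' := by intro r x; ext k; simp; ring }

lemma scaleCLM_apply {N : ℕ} (c : Fin N → ℝ) (u : EuclideanSpace ℝ (Fin N)) (k : Fin N) :
    scaleCLM c u k = c k * u k := rfl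

lemma scaleCLM_single {N : ℕ} (c : Fin N → ℝ) (j : Fin N) :
    scaleCLM c (EuclideanSpace.single j 1) = c j • EuclideanSpace.single j 1 := by
  ext k
  simp [scaleCLM_apply, EuclideanSpace.single_apply]
  by_cases h : k = j <;> simp [h]

lemma hessian_scale {N : ℕ} (c : Fin N → ℝ) (g : EuclideanSpace ℝ (Fin N) → ℝ)
    (hg : ContDiff ℝ 2 g) (u : EuclideanSpace ℝ (Fin N)) (i j : Fin N) :
    hessianMatrix (fun x => g (scaleCLM c x)) u i j
      = c i * c j * hessianMatrix g (scaleCLM c u) i j := by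
  set D := scaleCLM c
  have hgd : Differentiable ℝ g := hg.differentiable (by norm_num)
  set φ : EuclideanSpace ℝ (Fin N) → ℝ :=
    fun y => fderiv ℝ g y (EuclideanSpace.single j 1) with hφdef
  have hψ : ContDiff ℝ 1 (fderiv ℝ g) := hg.fderiv_right (by norm_num)
  have hφ : Differentiable ℝ φ := by
    exact (ContinuousLinearMap.apply ℝ ℝ (EuclideanSpace.single j 1)).differentiable.comp
      (hψ.differentiable (by norm_num))
  have hinner : (fun x => fderiv ℝ (fun y => g (D y)) x (EuclideanSpace.single j 1))
      = fun x => c j * φ (D x) := by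
    funext x
    have : fderiv ℝ (g ∘ D) x = (fderiv ℝ g (D x)).comp D := by
      rw [fderiv_comp x (hgd (D x)) D.differentiableAt, D.fderiv]
    show fderiv ℝ (g ∘ D) x (EuclideanSpace.single j 1) = _
    rw [this]
    simp only [ContinuousLinearMap.comp_apply, D, scaleCLM_single]
    simp [hφdef]
  show fderiv ℝ (fun x => fderiv ℝ (fun y => g (D y)) x (EuclideanSpace.single j 1)) u
      (EuclideanSpace.single i 1) = _
  rw [hinner]
  have hφD : DifferentiableAt ℝ (fun x => φ (D x)) u :=
    (hφ.comp D.differentiable).differentiableAt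
  rw [fderiv_const_mul hφD (c j)]
  have hcomp : fderiv ℝ (φ ∘ D) u = (fderiv ℝ φ (D u)).comp D := by
    rw [fderiv_comp u (hφ (D u)) D.differentiableAt, D.fderiv]
  simp only [ContinuousLinearMap.smul_apply]
  show c j • ((fderiv ℝ (φ ∘ D) u) (EuclideanSpace.single i 1)) = _
  rw [hcomp]
  simp only [ContinuousLinearMap.comp_apply, D, scaleCLM_single]
  rw [map_smul]
  simp only [hessianMatrix, hφdef, smul_eq_mul, Matrix.of_apply]
  ring

lemma quad_scale {N : ℕ} (c : Fin N → ℝ) (g : EuclideanSpace ℝ (Fin N) → ℝ)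
    (hg : ContDiff ℝ 2 g) (v : EuclideanSpace ℝ (Fin N)) :
    (v : Fin N → ℝ) ⬝ᵥ (hessianMatrix (fun x => g (scaleCLM c x)) v).mulVec v
      = (scaleCLM c v : Fin N → ℝ) ⬝ᵥ
          (hessianMatrix g (scaleCLM c v)).mulVec (scaleCLM c v) := by
  have h := hessian_scale c g hg v
  simp only [dotProduct, Matrix.mulVec, h, scaleCLM_apply]
  apply Finset.sum_congr rfl
  intro i _
  rw [Finset.mul_sum, Finset.mul_sum]
  apply Finset.sum_congr rfl
  intro j _
  ring

lemma rho_rescale {L : ℕ} {n m : Fin L → ℕ}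
    (F : (∀ l : Fin L, Matrix (Fin (n l)) (Fin (m l)) ℝ) → ℝ)
    (hF : ∀ (l : Fin L) (j : Fin (m l))
        (w : ∀ l : Fin L, Matrix (Fin (n l)) (Fin (m l)) ℝ),
      ContDiff ℝ 2 (fun u : EuclideanSpace ℝ (Fin (n l)) =>
        F (Function.update w l (Matrix.updateCol (w l) j fun i => u i))))
    (lam : ∀ l : Fin L, Fin (n l) → Fin (m l) → ℝ)
    (hinv : ∀ w : ∀ l : Fin L, Matrix (Fin (n l)) (Fin (m l)) ℝ,
      F w = F (fun l => Matrix.of fun i j => lam l i j * w l i j))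
    (w : ∀ l : Fin L, Matrix (Fin (n l)) (Fin (m l)) ℝ) (l : Fin L) (j : Fin (m l)) :
    rho F l j w = rho F l j (fun l => Matrix.of fun i j => lam l i j * w l i j) := by
  set wl : ∀ l : Fin L, Matrix (Fin (n l)) (Fin (m l)) ℝ :=
    fun l => Matrix.of fun i j => lam l i j * w l i j with hwl
  set c : Fin (n l) → ℝ := fun i => lam l i j with hc
  set g : EuclideanSpace ℝ (Fin (n l)) → ℝ :=
    fun u => F (Function.update wl l (Matrix.updateCol (wl l) j fun i => u i)) with hgdef
  have heq : (fun u : EuclideanSpace ℝ (Fin (n l)) =>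
      F (Function.update w l (Matrix.updateCol (w l) j fun i => u i)))
      = fun x => g (scaleCLM c x) := by
    funext u
    rw [hinv (Function.update w l (Matrix.updateCol (w l) j fun i => u i))]
    simp only [hgdef]
    congr 1
    funext l'
    by_cases h : l' = l
    · subst h
      simp only [Function.update_self]
      ext i j'
      by_cases hj : j' = j
      · subst hj
        simp [Matrix.updateCol_apply, scaleCLM_apply, hc]
      · simp [Matrix.updateCol_apply, hj, hwl]
    · simp [Function.update_of_ne h, hwl]
  show (fun i => w l i j) ⬝ᵥ (columnHessian F l j w).mulVec (fun i => w l i j) = _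
  unfold columnHessian
  rw [heq, quad_scale c g (hF l j wl) (WithLp.toLp 2 fun i => w l i j)]
  rfl

/-- Invariance of the layer-wise measures `ρ^l = max_j ρ^l(j)` and
`ρ^l_σ = Σ_j ρ^l(j)`, and of the network-wise measures `ρ^max = max_l ρ^l` and
`ρ^Σ = Σ_l ρ^l_σ`, under entry-wise positive rescalings leaving `F` invariant. -/
theorem rho_layer_network_invariant_under_entrywise_reparameterization
    {L : ℕ} (hL : 1 ≤ L) (n m : Fin L → ℕ) (hm : ∀ l, 1 ≤ m l)
    (F : (∀ l : Fin L, Matrix (Fin (n l)) (Fin (m l)) ℝ) → ℝ)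
    (hF : ∀ (l : Fin L) (j : Fin (m l))
        (w : ∀ l : Fin L, Matrix (Fin (n l)) (Fin (m l)) ℝ),
      ContDiff ℝ 2 (fun u : EuclideanSpace ℝ (Fin (n l)) =>
        F (Function.update w l (Matrix.updateCol (w l) j fun i => u i))))
    (lam : ∀ l : Fin L, Fin (n l) → Fin (m l) → ℝ)
    (hlam : ∀ (l : Fin L) (i : Fin (n l)) (j : Fin (m l)), 0 < lam l i j)
    (hinv : ∀ w : ∀ l : Fin L, Matrix (Fin (n l)) (Fin (m l)) ℝ,
      F w = F (fun l => Matrix.of fun i j => lam l i j * w l i j)) :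
    ∀ w : ∀ l : Fin L, Matrix (Fin (n l)) (Fin (m l)) ℝ,
      let wl := fun l => Matrix.of fun i j => lam l i j * w l i j
      (∀ l : Fin L,
        Finset.univ.sup' ⟨⟨0, hm l⟩, Finset.mem_univ _⟩ (fun j => rho F l j w) =
          Finset.univ.sup' ⟨⟨0, hm l⟩, Finset.mem_univ _⟩ (fun j => rho F l j wl)) ∧
      (∀ l : Fin L,
        ∑ j : Fin (m l), rho F l j w = ∑ j : Fin (m l), rho F l j wl) ∧
      (Finset.univ.sup' ⟨⟨0, hL⟩, Finset.mem_univ _⟩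
          (fun l => Finset.univ.sup' ⟨⟨0, hm l⟩, Finset.mem_univ _⟩
            (fun j => rho F l j w)) =
        Finset.univ.sup' ⟨⟨0, hL⟩, Finset.mem_univ _⟩
          (fun l => Finset.univ.sup' ⟨⟨0, hm l⟩, Finset.mem_univ _⟩
            (fun j => rho F l j wl))) ∧
      (∑ l : Fin L, ∑ j : Fin (m l), rho F l j w =
        ∑ l : Fin L, ∑ j : Fin (m l), rho F l j wl) := by
  intro w
  intro wl
  have hwl : wl = fun l => Matrix.of fun i j => lam l i j * w l i j := rfl
  have key : ∀ (l : Fin L) (j : Fin (m l)), rho F l j w = rho F l j wl := fun l j => by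
    rw [hwl]; exact rho_rescale F hF lam hinv w l j
  refine ⟨fun l => ?_, fun l => ?_, ?_, ?_⟩ <;> simp only [key]
end
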